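/- Let V : (0,∞) → ℂ be a bounded measurable function with compact support. For k ∈ ℂ \ {0} define the kernel M_k(x,y) = √V(x) · g_k(x,y) · √|V(y)| on (0,∞) × (0,∞), and define M_0(x,y) = √V(x) · min(x,y) · √|V(y)|. Then each M_k belongs to L²((0,∞) × (0,∞)) and the map k ↦ M_k is an entire function from ℂ to L²((0,∞) × (0,∞)); that is, the Birman–Schwinger operator √V (−Δ − k²)^{-1} √|V| for the Dirichlet Laplacian on the half-line extends to an entire family of Hilbert–Schmidt operators. -/

import Mathlib

/-!
Expanding both exponentials of `g_k(x,y)` in powers of `k` gives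
`g_k(x,y) = ∑ₙ kⁿ iⁿ ((x+y)ⁿ⁺¹ - |x-y|ⁿ⁺¹) / (2 (n+1)!)`; the constant terms cancel, so the series
is entire in `k` and its value at `k = 0` is `(x + y - |x - y|)/2 = min x y`. On the support of
`√V(x)√|V(y)|` we have `|x|, |y| ≤ R`, so the `n`-th weighted coefficient `cₙ` is bounded by
`(2R)ⁿ⁺¹/(n+1)!` times that weight, which lies in `L²` because it is bounded with compact support.
Hence `∑ₙ kⁿ cₙ` is an `L²`-valued power series of infinite radius, and its `L²` sum is `M_k`
because an `L²`-convergent series also converges almost everywhere.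
-/

open MeasureTheory Set

/-- The integral kernel of the resolvent `(-Δ - k²)⁻¹` of the Dirichlet Laplacian on the
half-line `(0,∞)`. -/
noncomputable def halfLineResolventKernel (k : ℂ) (x y : ℝ) : ℂ :=
  (Complex.exp (Complex.I * k * (x + y)) - Complex.exp (Complex.I * k * |x - y|)) /
    (2 * Complex.I * k)

noncomputable def sqrtC (V : ℝ → ℂ) (x : ℝ) : ℂ :=
  if V x = 0 then 0 else V x / (Real.sqrt (‖V x‖) : ℂ)

/-- The kernel `M_k(x,y) = √V(x) g_k(x,y) √|V(y)|` of the Birman–Schwinger operator for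
`k ≠ 0`, and its value `√V(x) min(x,y) √|V(y)|` at `k = 0`. -/
noncomputable def bsKernel (V : ℝ → ℂ) (k : ℂ) (p : ℝ × ℝ) : ℂ :=
  sqrtC V p.1 *
    (if k = 0 then ((min p.1 p.2 : ℝ) : ℂ) else halfLineResolventKernel k p.1 p.2) *
    (Real.sqrt (‖V p.2‖) : ℂ)

open scoped ENNReal NNReal Nat

theorem differentiable_tsum_pow_smul {E : Type*} [NormedAddCommGroup E] [NormedSpace ℂ E]
    [CompleteSpace E] {a : ℕ → E} (ha : ∀ r : ℝ≥0, Summable fun n => ‖a n‖ * r ^ n) :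
    Differentiable ℂ fun k : ℂ => ∑' n, k ^ n • a n := by
  intro k
  set r : ℝ≥0 := ‖k‖₊ + 1
  have hk : k ∈ Metric.ball (0 : ℂ) r := by
    rw [mem_ball_zero_iff]
    exact lt_add_one ‖k‖
  refine (Complex.differentiableOn_tsum_of_summable_norm (ha r)
    (fun n => by fun_prop)
    Metric.isOpen_ball (fun n z hz => ?_)).differentiableAt (Metric.isOpen_ball.mem_nhds hk)
  rw [mem_ball_zero_iff] at hz
  rw [norm_smul, norm_pow, mul_comm]
  gcongr

namespace MeasureTheory.Lp

variable {α E : Type*} [MeasurableSpace α] {μ : Measure α} [NormedAddCommGroup E]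
  [NormedSpace ℂ E] [CompleteSpace E] {p : ℝ≥0∞} [Fact (1 ≤ p)]

theorem exists_differentiable_toLp_of_hasSum_pow_smul {c : ℕ → α → E}
    (hc : ∀ n, MemLp (c n) p μ)
    (hc_summable : ∀ r : ℝ≥0, Summable fun n => ‖(hc n).toLp (c n)‖ * r ^ n)
    {F : ℂ → α → E} (hF : ∀ k, ∀ᵐ x ∂μ, HasSum (fun n => k ^ n • c n x) (F k x)) :
    ∃ h : ∀ k, MemLp (F k) p μ, Differentiable ℂ fun k => (h k).toLp (F k) := by
  set a : ℕ → Lp E p μ := fun n => (hc n).toLp (c n)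
  have hsum_eq : ∀ k, (∑' n, k ^ n • a n : Lp E p μ) =ᵐ[μ] F k := by
    intro k
    have hnorm : ∑' n, ‖k ^ n • a n‖ₑ ≠ ∞ := by
      refine tsum_enorm_ne_top_iff_summable_norm.2 ((hc_summable ‖k‖₊).congr fun n => ?_)
      rw [norm_smul, norm_pow, mul_comm, coe_nnnorm]
    have hcoe : ∀ᵐ x ∂μ, ∀ n, (k ^ n • a n : Lp E p μ) x = k ^ n • c n x := by
      rw [ae_all_iff]
      intro n
      filter_upwards [coeFn_smul (k ^ n) (a n), (hc n).coeFn_toLp] with x hsmul hx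
      rw [hsmul, Pi.smul_apply, hx]
    -- an `Lᵖ`-convergent series also converges almost everywhere
    filter_upwards [hasSum_coeFn_tsum hnorm, hcoe, hF k] with x hx hxc hxF
    simp only [hxc] at hx
    exact hx.unique hxF
  have hF_mem : ∀ k, MemLp (F k) p μ := fun k => (Lp.memLp _).ae_eq (hsum_eq k)
  have htoLp : (fun k => (hF_mem k).toLp (F k)) = fun k => ∑' n, k ^ n • a n := by
    funext k
    rw [← toLp_coeFn (∑' n, k ^ n • a n) (Lp.memLp _), MemLp.toLp_eq_toLp_iff]
    exact (hsum_eq k).symm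
  exact ⟨hF_mem, htoLp ▸ differentiable_tsum_pow_smul hc_summable⟩

end MeasureTheory.Lp

theorem Complex.hasSum_pow_succ_div_factorial (z : ℂ) :
    HasSum (fun n => z ^ (n + 1) / (n + 1)!) (Complex.exp z - 1) := by
  have h := NormedSpace.expSeries_div_hasSum_exp (𝔸 := ℂ) z
  rw [← Complex.exp_eq_exp_ℂ, ← hasSum_nat_add_iff' 1] at h
  simpa using h

theorem summable_pow_succ_div_factorial_mul_pow {a r : ℝ} (ha : 0 ≤ a) (hr : 0 ≤ r) :
    Summable fun n => a ^ (n + 1) / (n + 1)! * r ^ n := by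
  refine Summable.of_nonneg_of_le (fun n => by positivity) (fun n => ?_)
    ((Real.summable_pow_div_factorial (a * r)).mul_left a)
  calc a ^ (n + 1) / (n + 1)! * r ^ n = a ^ (n + 1) * r ^ n / (n + 1)! := by ring
    _ ≤ a ^ (n + 1) * r ^ n / n ! := by gcongr; exact n.le_succ
    _ = a * ((a * r) ^ n / n !) := by ring

/-- The `n`-th Taylor coefficient of `k ↦ halfLineResolventKernel k x y`. -/
noncomputable def halfLineResolventCoeff (n : ℕ) (x y : ℝ) : ℂ :=
  Complex.I ^ n * (((x + y : ℝ) : ℂ) ^ (n + 1) - ((|x - y| : ℝ) : ℂ) ^ (n + 1)) / (2 * (n + 1)!)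

theorem hasSum_pow_mul_halfLineResolventCoeff (k : ℂ) (x y : ℝ) :
    HasSum (fun n => k ^ n * halfLineResolventCoeff n x y)
      (if k = 0 then ((min x y : ℝ) : ℂ) else halfLineResolventKernel k x y) := by
  split_ifs with hk
  · subst hk
    have hmin : min x y = (x + y - |x - y|) / 2 := by
      rcases le_total x y with h | h
      · rw [min_eq_left h, abs_of_nonpos (by linarith)]; ring
      · rw [min_eq_right h, abs_of_nonneg (by linarith)]; ring
    convert hasSum_single (f := fun n => (0 : ℂ) ^ n * halfLineResolventCoeff n x y) 0
      (fun n hn => by simp [hn])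
    simp [halfLineResolventCoeff, hmin]
  · have hterm : (fun n => k ^ n * halfLineResolventCoeff n x y) = fun n =>
        ((Complex.I * k * (x + y)) ^ (n + 1) / (n + 1)! -
          (Complex.I * k * |x - y|) ^ (n + 1) / (n + 1)!) / (2 * Complex.I * k) := by
      funext n
      simp only [halfLineResolventCoeff, Complex.ofReal_add, mul_pow]
      field_simp
      ring
    have hvalue : halfLineResolventKernel k x y =
        (Complex.exp (Complex.I * k * (x + y)) - 1 -
          (Complex.exp (Complex.I * k * |x - y|) - 1)) / (2 * Complex.I * k) := by
      rw [halfLineResolventKernel]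
      ring
    rw [hterm, hvalue]
    exact ((Complex.hasSum_pow_succ_div_factorial _).sub
      (Complex.hasSum_pow_succ_div_factorial _)).div_const _

theorem norm_halfLineResolventCoeff_le {R x y : ℝ} (hx : |x| ≤ R) (hy : |y| ≤ R) (n : ℕ) :
    ‖halfLineResolventCoeff n x y‖ ≤ (2 * R) ^ (n + 1) / (n + 1)! := by
  have hR : 0 ≤ R := (abs_nonneg x).trans hx
  have hsum : ‖((x + y : ℝ) : ℂ)‖ ≤ 2 * R := by
    rw [Complex.norm_real, Real.norm_eq_abs]
    linarith [abs_add_le x y]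
  have hdiff : ‖((|x - y| : ℝ) : ℂ)‖ ≤ 2 * R := by
    rw [Complex.norm_real, Real.norm_eq_abs, abs_abs]
    linarith [abs_sub x y]
  have hpow : ‖((x + y : ℝ) : ℂ) ^ (n + 1) - ((|x - y| : ℝ) : ℂ) ^ (n + 1)‖ ≤
      2 * (2 * R) ^ (n + 1) :=
    calc _ ≤ ‖((x + y : ℝ) : ℂ)‖ ^ (n + 1) + ‖((|x - y| : ℝ) : ℂ)‖ ^ (n + 1) := by
          rw [← norm_pow, ← norm_pow]; exact norm_sub_le _ _
      _ ≤ 2 * (2 * R) ^ (n + 1) := by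
          rw [two_mul ((2 * R) ^ (n + 1))]; gcongr
  rw [halfLineResolventCoeff, norm_div, norm_mul, norm_pow, Complex.norm_I, one_pow, one_mul,
    norm_mul, Complex.norm_two, Complex.norm_natCast]
  calc _ ≤ 2 * (2 * R) ^ (n + 1) / (2 * (n + 1)!) := by gcongr
    _ = _ := mul_div_mul_left _ _ two_ne_zero

theorem continuous_halfLineResolventCoeff (n : ℕ) :
    Continuous fun p : ℝ × ℝ => halfLineResolventCoeff n p.1 p.2 := by
  unfold halfLineResolventCoeff
  fun_prop

theorem norm_sqrtC (V : ℝ → ℂ) (x : ℝ) : ‖sqrtC V x‖ = √‖V x‖ := by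
  unfold sqrtC
  split_ifs with h
  · simp [h]
  · rw [norm_div, Complex.norm_real, Real.norm_eq_abs, abs_of_nonneg (Real.sqrt_nonneg _),
      Real.div_sqrt]

theorem measurable_sqrtC {V : ℝ → ℂ} (hV : Measurable V) : Measurable (sqrtC V) :=
  Measurable.ite (hV (measurableSet_singleton 0)) measurable_const
    (hV.div (Complex.measurable_ofReal.comp hV.norm.sqrt))

noncomputable def bsWeight (V : ℝ → ℂ) (p : ℝ × ℝ) : ℂ :=
  sqrtC V p.1 * (√‖V p.2‖ : ℂ)

theorem norm_bsWeight (V : ℝ → ℂ) (p : ℝ × ℝ) : ‖bsWeight V p‖ = √‖V p.1‖ * √‖V p.2‖ := by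
  rw [bsWeight, norm_mul, norm_sqrtC, Complex.norm_real, Real.norm_of_nonneg (Real.sqrt_nonneg _)]

theorem bsWeight_eq_zero_of_eq_zero_or_eq_zero {V : ℝ → ℂ} {p : ℝ × ℝ}
    (h : V p.1 = 0 ∨ V p.2 = 0) : bsWeight V p = 0 := by
  rw [← norm_eq_zero, norm_bsWeight]
  rcases h with h | h <;> simp [h]

theorem measurable_bsWeight {V : ℝ → ℂ} (hV : Measurable V) : Measurable (bsWeight V) :=
  ((measurable_sqrtC hV).comp measurable_fst).mul
    (Complex.measurable_ofReal.comp (hV.norm.sqrt.comp measurable_snd))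

theorem HasCompactSupport.bsWeight {V : ℝ → ℂ} (hV : HasCompactSupport V) :
    HasCompactSupport (bsWeight V) := by
  refine HasCompactSupport.intro (hV.isCompact.prod hV.isCompact) fun p hp => ?_
  apply bsWeight_eq_zero_of_eq_zero_or_eq_zero
  rw [mem_prod, not_and_or] at hp
  exact hp.imp image_eq_zero_of_notMem_tsupport image_eq_zero_of_notMem_tsupport

theorem memLp_bsWeight {V : ℝ → ℂ} (hV : Measurable V) {C : ℝ} (hC : ∀ x, ‖V x‖ ≤ C)
    (hsupp : HasCompactSupport V) (q : ℝ≥0∞) (μ : Measure (ℝ × ℝ))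
    [IsFiniteMeasureOnCompacts μ] : MemLp (bsWeight V) q μ := by
  refine hsupp.bsWeight.memLp_of_bound (measurable_bsWeight hV).aestronglyMeasurable C
    (ae_of_all _ fun p => ?_)
  have hC0 : 0 ≤ C := (norm_nonneg _).trans (hC 0)
  calc ‖bsWeight V p‖ = √‖V p.1‖ * √‖V p.2‖ := norm_bsWeight V p
    _ ≤ √C * √C := by gcongr <;> exact hC _
    _ = C := Real.mul_self_sqrt hC0

noncomputable def bsKernelCoeff (V : ℝ → ℂ) (n : ℕ) (p : ℝ × ℝ) : ℂ :=
  bsWeight V p * halfLineResolventCoeff n p.1 p.2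

theorem hasSum_pow_smul_bsKernelCoeff (V : ℝ → ℂ) (k : ℂ) (p : ℝ × ℝ) :
    HasSum (fun n => k ^ n • bsKernelCoeff V n p) (bsKernel V k p) := by
  have hsplit : bsKernel V k p = bsWeight V p *
      (if k = 0 then ((min p.1 p.2 : ℝ) : ℂ) else halfLineResolventKernel k p.1 p.2) := by
    rw [bsKernel, bsWeight]
    ring
  rw [hsplit]
  simpa only [bsKernelCoeff, smul_eq_mul, mul_left_comm] using
    (hasSum_pow_mul_halfLineResolventCoeff k p.1 p.2).mul_left (bsWeight V p)

theorem measurable_bsKernelCoeff {V : ℝ → ℂ} (hV : Measurable V) (n : ℕ) :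
    Measurable (bsKernelCoeff V n) :=
  (measurable_bsWeight hV).mul (continuous_halfLineResolventCoeff n).measurable

theorem norm_bsKernelCoeff_le {V : ℝ → ℂ} {R : ℝ} (hR : ∀ x, V x ≠ 0 → |x| ≤ R) (n : ℕ)
    (p : ℝ × ℝ) : ‖bsKernelCoeff V n p‖ ≤ (2 * R) ^ (n + 1) / (n + 1)! * ‖bsWeight V p‖ := by
  by_cases hV : V p.1 = 0 ∨ V p.2 = 0
  · simp [bsKernelCoeff, bsWeight_eq_zero_of_eq_zero_or_eq_zero hV]
  · rw [not_or] at hV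
    rw [bsKernelCoeff, norm_mul, mul_comm]
    gcongr
    exact norm_halfLineResolventCoeff_le (hR _ hV.1) (hR _ hV.2) n

theorem bsKernel_entire_general (V : ℝ → ℂ) (hmeas : Measurable V)
    (hbdd : ∃ C : ℝ, ∀ x : ℝ, ‖V x‖ ≤ C)
    (hsupp : HasCompactSupport V) :
    ∃ h : ∀ k : ℂ, MemLp (bsKernel V k) 2
        ((volume.restrict (Ioi (0 : ℝ))).prod (volume.restrict (Ioi (0 : ℝ)))),
      Differentiable ℂ fun k => (h k).toLp (bsKernel V k) := by
  obtain ⟨C, hC⟩ := hbdd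
  obtain ⟨R, hR0, hR⟩ := hsupp.isCompact.isBounded.exists_pos_norm_le
  have hw := memLp_bsWeight hmeas hC hsupp 2
    ((volume.restrict (Ioi (0 : ℝ))).prod (volume.restrict (Ioi (0 : ℝ))))
  have hcoeff_le := norm_bsKernelCoeff_le (V := V) fun x hx => hR x (subset_tsupport V hx)
  have hc n : MemLp (bsKernelCoeff V n) 2 _ :=
    hw.of_le_mul (measurable_bsKernelCoeff hmeas n).aestronglyMeasurable
      (ae_of_all _ (hcoeff_le n))
  have hc_norm n : ‖(hc n).toLp‖ ≤ (2 * R) ^ (n + 1) / (n + 1)! * ‖hw.toLp‖ := by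
    refine Lp.norm_le_mul_norm_of_ae_le_mul ?_
    filter_upwards [(hc n).coeFn_toLp, hw.coeFn_toLp] with p hcp hwp
    rw [hcp, hwp]
    exact hcoeff_le n p
  refine Lp.exists_differentiable_toLp_of_hasSum_pow_smul hc (fun r => ?_)
    (fun k => ae_of_all _ (hasSum_pow_smul_bsKernelCoeff V k))
  have hsummable := summable_pow_succ_div_factorial_mul_pow (a := 2 * R) (by positivity)
    r.coe_nonneg
  refine (hsummable.mul_right ‖hw.toLp‖).of_nonneg_of_le (fun n => by positivity) (fun n => ?_)
  rw [mul_right_comm]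
  gcongr
  exact hc_norm n

/-- For a bounded measurable `V` with compact support in `(0,∞)`, each Birman–Schwinger
kernel `M_k` lies in `L²((0,∞) × (0,∞))` and the map `k ↦ M_k` is an entire function with
values in `L²((0,∞) × (0,∞))`: the Birman–Schwinger operator
`√V (-Δ - k²)⁻¹ √|V|` extends to an entire family of Hilbert–Schmidt operators. -/
theorem bsKernel_entire (V : ℝ → ℂ) (hmeas : Measurable V)
    (hbdd : ∃ C : ℝ, ∀ x : ℝ, ‖V x‖ ≤ C)
    (hsupp : HasCompactSupport V) (hpos : Function.support V ⊆ Ioi 0) :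
    ∃ h : ∀ k : ℂ, MemLp (bsKernel V k) 2
        ((volume.restrict (Ioi (0 : ℝ))).prod (volume.restrict (Ioi (0 : ℝ)))),
      Differentiable ℂ fun k => (h k).toLp (bsKernel V k) :=
  bsKernel_entire_general V hmeas hbdd hsupp
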